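/- Fix k ∈ {2, 3, 4, 6} and n ≥ 3, and let μ_k ⊆ ℂˣ be the group of k-th roots of unity. Let B be an alternating ℂ-bilinear form on V = (ℂ×ℂ)^n such that B(T_{a,σ} v, T_{a,σ} w) = B(v, w) for every a : Fin n → μ_k with ∏_i a(i) = 1, every even permutation σ of Fin n, and all v, w ∈ V. Then there exists c ∈ ℂ with B = c·ω; in particular the space of such invariant alternating forms is one-dimensional. (This computes h^{2,0}(Z) = 1 for Z = E^{2n}/Γ′ with Γ′ = {(a₁,…,aₙ,τ) ∈ G^n ⋊ S_n : a₁⋯aₙ = 1, τ ∈ A_n}, showing Z is a primitively symplectic V-manifold.) -/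

import Mathlib

open scoped BigOperators

/-- The linear map `T_{a,σ}` on `(ℂ×ℂ)ⁿ`:
`(T_{a,σ} v)_i = (a(σ⁻¹ i)·(v(σ⁻¹ i))₁, a(σ⁻¹ i)⁻¹·(v(σ⁻¹ i))₂)`. -/
def Tmap {n : ℕ} (a : Fin n → ℂˣ) (σ : Equiv.Perm (Fin n))
    (v : Fin n → ℂ × ℂ) : Fin n → ℂ × ℂ :=
  fun i => ((a (σ⁻¹ i) : ℂ) * (v (σ⁻¹ i)).1, (((a (σ⁻¹ i))⁻¹ : ℂˣ) : ℂ) * (v (σ⁻¹ i)).2)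

/-- The standard symplectic form `ω(v,w) = Σᵢ ((v i)₁(w i)₂ − (v i)₂(w i)₁)`. -/
noncomputable def omegaForm {n : ℕ} (v w : Fin n → ℂ × ℂ) : ℂ :=
  ∑ i, ((v i).1 * (w i).2 - (v i).2 * (w i).1)

/-!
The diagonal elements `a = (…, ζ, …, ζ⁻¹, …)` with `ζ ≠ 1` a `k`-th root of unity scale the `i`-th
coordinate plane by `(ζ, ζ⁻¹)` while fixing a `j`-th one (a third index `l` absorbs `ζ⁻¹`, which is
where `n ≥ 3` enters), so an invariant form pairs distinct coordinate planes trivially. On a single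
plane an alternating form is a multiple of `x₁y₂ - x₂y₁`, and even permutations, acting transitively
on the indices, force the same multiple on every plane.
-/

lemma LinearMap.eq_zero_of_map_mul_inv_mul {K : Type*} [Field K] (ψ : K × K →ₗ[K] K) {c : K}
    (hc : c ≠ 1) (h : ∀ x y, ψ (c * x, c⁻¹ * y) = ψ (x, y)) : ψ = 0 := by
  have fixed_eq_zero : ∀ {d : K} (u : K × K), d ≠ 1 → ψ (d • u) = ψ u → ψ u = 0 := by
    intro d u hd hu
    rw [map_smul, smul_eq_mul] at hu
    by_contra hne
    exact hd ((mul_eq_right₀ hne).mp hu)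
  ext
  · exact fixed_eq_zero (d := c) _ hc (by simpa using h 1 0)
  · exact fixed_eq_zero (d := c⁻¹) _ (inv_ne_one.mpr hc) (by simpa using h 0 1)

lemma LinearMap.IsAlt.apply_eq_cross_mul {K : Type*} [Field K]
    {β : K × K →ₗ[K] K × K →ₗ[K] K} (hβ : β.IsAlt) (x y : K × K) :
    β x y = (x.1 * y.2 - x.2 * y.1) * β (1, 0) (0, 1) := by
  have hx : x = x.1 • ((1 : K), (0 : K)) + x.2 • ((0 : K), (1 : K)) := by ext <;> simp
  have hy : y = y.1 • ((1 : K), (0 : K)) + y.2 • ((0 : K), (1 : K)) := by ext <;> simp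
  conv_lhs => rw [hx, hy]
  simp only [map_add, map_smul, LinearMap.add_apply, LinearMap.smul_apply, smul_eq_mul,
    hβ.self_eq_zero, ← hβ.neg (1, 0) (0, 1)]
  ring

lemma Complex.exists_unit_pow_eq_one_ne_one {k : ℕ} (hk : 1 < k) :
    ∃ ζ : ℂˣ, ζ ^ k = 1 ∧ ζ ≠ 1 := by
  have hζ := Complex.isPrimitiveRoot_exp k (by omega)
  refine ⟨(hζ.isUnit (by omega)).unit, Units.ext hζ.pow_eq_one, fun h => hζ.ne_one hk ?_⟩
  simpa using congrArg Units.val h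

lemma Tmap_single {n : ℕ} (a : Fin n → ℂˣ) (σ : Equiv.Perm (Fin n)) (j : Fin n) (x : ℂ × ℂ) :
    Tmap a σ (Pi.single j x) = Pi.single (σ j) ((a j : ℂ) * x.1, ((a j : ℂ))⁻¹ * x.2) := by
  funext i
  rcases eq_or_ne i (σ j) with rfl | hi
  · simp [Tmap]
  · have : σ.symm i ≠ j := fun h => hi (by rw [← h]; simp)
    simp [Tmap, hi, this]

/-- Invariance under the group `Γ'` of the paper: diagonal parts in `μ_k` with product `1`,
permutation parts in the alternating group. -/
def IsTmapInvariant {n : ℕ} (k : ℕ) (B : (Fin n → ℂ × ℂ) →ₗ[ℂ] (Fin n → ℂ × ℂ) →ₗ[ℂ] ℂ) : Prop :=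
  ∀ a : Fin n → ℂˣ, (∀ i, a i ^ k = 1) → (∏ i, a i) = 1 →
    ∀ σ : Equiv.Perm (Fin n), Equiv.Perm.sign σ = 1 →
      ∀ v w, B (Tmap a σ v) (Tmap a σ w) = B v w

namespace IsTmapInvariant

variable {k n : ℕ} {B : (Fin n → ℂ × ℂ) →ₗ[ℂ] (Fin n → ℂ × ℂ) →ₗ[ℂ] ℂ}

lemma apply_single_single_of_ne (hB : IsTmapInvariant k B) (hk : 1 < k) (hn : 3 ≤ n)
    {i j : Fin n} (hij : i ≠ j) (x y : ℂ × ℂ) : B (Pi.single i x) (Pi.single j y) = 0 := by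
  obtain ⟨ζ, hζk, hζ⟩ := Complex.exists_unit_pow_eq_one_ne_one hk
  obtain ⟨l, hli, hlj⟩ := Fin.exists_ne_and_ne_of_two_lt i j (by omega)
  set a : Fin n → ℂˣ := Pi.mulSingle i ζ * Pi.mulSingle l ζ⁻¹
  have hai : a i = ζ := by simp [a, hli.symm]
  have haj : a j = 1 := by simp [a, hij.symm, hlj.symm]
  have hak : ∀ m, a m ^ k = 1 := by
    intro m
    simp only [a, Pi.mul_apply, Pi.mulSingle_apply]
    split_ifs <;> simp [hζk]
  have haprod : ∏ m, a m = 1 := by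
    simp only [a, Pi.mul_apply, Finset.prod_mul_distrib, Fintype.prod_pi_mulSingle',
      mul_inv_cancel]
  let ψ : ℂ × ℂ →ₗ[ℂ] ℂ :=
    (B.flip (Pi.single j y)).comp (LinearMap.single ℂ (fun _ => ℂ × ℂ) i)
  suffices ψ = 0 from LinearMap.congr_fun this x
  refine ψ.eq_zero_of_map_mul_inv_mul (c := ζ) (fun h => hζ (Units.ext h)) fun x₁ x₂ => ?_
  have h := hB a hak haprod 1 (by simp) (Pi.single i (x₁, x₂)) (Pi.single j y)
  simpa [ψ, Tmap_single, hai, haj] using h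

lemma apply_single_single_eq (hB : IsTmapInvariant k B) (hn : 3 ≤ n) (i j : Fin n)
    (x y : ℂ × ℂ) : B (Pi.single i x) (Pi.single i y) = B (Pi.single j x) (Pi.single j y) := by
  rcases eq_or_ne i j with rfl | hij
  · rfl
  obtain ⟨l, hli, hlj⟩ := Fin.exists_ne_and_ne_of_two_lt i j (by omega)
  set σ := Equiv.swap i l * Equiv.swap i j
  have hσ : Equiv.Perm.sign σ = 1 := by
    simp [σ, Equiv.Perm.sign_swap hij, Equiv.Perm.sign_swap hli.symm]
  have hσi : σ i = j := by simp [σ, Equiv.swap_apply_of_ne_of_ne hij.symm hlj.symm]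
  have h := hB 1 (by simp) (by simp) σ hσ (Pi.single i x) (Pi.single i y)
  simpa [Tmap_single, hσi] using h.symm

end IsTmapInvariant

lemma LinearMap.apply_eq_sum_sum_single {ι R M : Type*} [Fintype ι] [DecidableEq ι] [CommRing R]
    [AddCommGroup M] [Module R M] (B : (ι → M) →ₗ[R] (ι → M) →ₗ[R] R) (v w : ι → M) :
    B v w = ∑ i, ∑ j, B (Pi.single i (v i)) (Pi.single j (w j)) := by
  conv_lhs => rw [← Finset.univ_sum_single v, ← Finset.univ_sum_single w]
  simp only [map_sum, LinearMap.sum_apply]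
  exact Finset.sum_comm

theorem stmt19 (k : ℕ) (hk : k ∈ ({2, 3, 4, 6} : Set ℕ)) {n : ℕ} (hn : 3 ≤ n)
    (B : (Fin n → ℂ × ℂ) →ₗ[ℂ] (Fin n → ℂ × ℂ) →ₗ[ℂ] ℂ)
    (hBalt : ∀ v, B v v = 0)
    (hBinv : ∀ a : Fin n → ℂˣ, (∀ i, a i ^ k = 1) → (∏ i, a i) = 1 →
      ∀ σ : Equiv.Perm (Fin n), Equiv.Perm.sign σ = 1 →
        ∀ v w, B (Tmap a σ v) (Tmap a σ w) = B v w) :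
    ∃ c : ℂ, ∀ v w, B v w = c * omegaForm v w := by
  have hk₁ : 1 < k := by
    simp only [Set.mem_insert_iff, Set.mem_singleton_iff] at hk
    omega
  have hB : IsTmapInvariant k B := hBinv
  let i₀ : Fin n := ⟨0, by omega⟩
  have diag (i : Fin n) (x y : ℂ × ℂ) : B (Pi.single i x) (Pi.single i y) =
      (x.1 * y.2 - x.2 * y.1) * B (Pi.single i₀ (1, 0)) (Pi.single i₀ (0, 1)) := by
    rw [hB.apply_single_single_eq hn i i₀]
    let single₀ := LinearMap.single ℂ (fun _ : Fin n => ℂ × ℂ) i₀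
    exact LinearMap.IsAlt.apply_eq_cross_mul (β := B.compl₁₂ single₀ single₀)
      (fun _ => hBalt _) x y
  refine ⟨B (Pi.single i₀ (1, 0)) (Pi.single i₀ (0, 1)), fun v w => ?_⟩
  rw [B.apply_eq_sum_sum_single, omegaForm, Finset.mul_sum]
  refine Finset.sum_congr rfl fun i _ => ?_
  rw [Finset.sum_eq_single i (fun j _ hj => hB.apply_single_single_of_ne hk₁ hn hj.symm _ _)
    (by simp), diag, mul_comm]
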